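/- arXiv:1808.04879 — 9 statements merged into one kernel-verified Lean document; each statement's English description precedes it below -/
import Mathlib

section
/- Suppose Σ_{s'=1}^{s} |m_{s'}| ≤ |m_0| and m_0 < 0. If the center node v_c is infected, i.e., S(v_c) = A, then the DBGW wavelet coefficient W = Σ_{v ∈ V} ψ(v)·S(v) satisfies 2·A·m_0 ≤ W ≤ 0. -/
/-- **Sign/bound of DBGW coefficients at infected nodes, `m 0 < 0` case.**
If `∑_{s'=1}^{s} |m s'| ≤ |m 0|` and `m 0 < 0`, and the center node `v_c` is infected
(`S v_c = A`), then the DBGW wavelet coefficient `W = ∑_{v} ψ(v) · S(v)` satisfies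
`2 · A · m 0 ≤ W ≤ 0`. -/
theorem dbgw_infected_center_neg {V : Type*} [Fintype V] [DecidableEq V]
    (v_c : V) (s : ℕ) (hs : 1 ≤ s)
    (R : ℕ → Finset V)
    (hR_ne : ∀ s', 1 ≤ s' → s' ≤ s → (R s').Nonempty)
    (hR_vc : ∀ s', 1 ≤ s' → s' ≤ s → v_c ∉ R s')
    (hR_disj : ∀ s' t', 1 ≤ s' → s' ≤ s → 1 ≤ t' → t' ≤ s → s' ≠ t' →
      Disjoint (R s') (R t'))
    (h : V → ℝ) (hh : ∀ v, 0 < h v)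
    (m : ℕ → ℝ) (hm : ∑ s' ∈ Finset.range (s + 1), m s' = 0)
    (hmabs : ∑ s' ∈ Finset.Icc 1 s, |m s'| ≤ |m 0|)
    (hm0 : m 0 < 0)
    (ψ : V → ℝ)
    (hψc : ψ v_c = m 0)
    (hψR : ∀ s', 1 ≤ s' → s' ≤ s → ∀ v ∈ R s',
      ψ v = m s' * h v / (∑ u ∈ R s', h u))
    (hψ0 : ∀ v, v ≠ v_c → (∀ s', 1 ≤ s' → s' ≤ s → v ∉ R s') → ψ v = 0)
    (A : ℝ) (hA : 0 < A)
    (S : V → ℝ) (hS : ∀ v, S v = A ∨ S v = -A)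
    (hSc : S v_c = A) :
    2 * A * m 0 ≤ ∑ v, ψ v * S v ∧ ∑ v, ψ v * S v ≤ 0 := by
  set T := Finset.Icc 1 s with hT
  set U := T.biUnion R with hU
  have hvcU : v_c ∉ U := by
    simp only [hU, Finset.mem_biUnion, not_exists]
    rintro s' ⟨hs', hv⟩
    exact hR_vc s' (Finset.mem_Icc.mp hs').1 (Finset.mem_Icc.mp hs').2 hv
  have hsum : ∑ v, ψ v * S v = ψ v_c * S v_c + ∑ s' ∈ T, ∑ v ∈ R s', ψ v * S v := by
    rw [← Finset.sum_biUnion (by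
      intro a ha b hb hab
      exact hR_disj a b (Finset.mem_Icc.mp ha).1 (Finset.mem_Icc.mp ha).2
        (Finset.mem_Icc.mp hb).1 (Finset.mem_Icc.mp hb).2 hab)]
    have hvcU' : v_c ∉ T.biUnion R := hvcU
    rw [← (Finset.sum_insert hvcU' :
      ∑ v ∈ insert v_c (T.biUnion R), ψ v * S v = _)]
    symm
    apply Finset.sum_subset (Finset.subset_univ _)
    intro v _ hv
    simp only [Finset.mem_insert, hU, Finset.mem_biUnion, not_or, not_exists] at hv
    rw [hψ0 v hv.1 (fun s' h1 h2 hmem =>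
      hv.2 s' ⟨Finset.mem_Icc.mpr ⟨h1, h2⟩, hmem⟩), zero_mul]
  have hring : ∀ s' ∈ T, |∑ v ∈ R s', ψ v * S v| ≤ |m s'| * A := by
    intro s' hs'
    obtain ⟨h1, h2⟩ := Finset.mem_Icc.mp hs'
    set H := ∑ u ∈ R s', h u with hH
    have hHpos : 0 < H := Finset.sum_pos (fun u _ => hh u) (hR_ne s' h1 h2)
    calc |∑ v ∈ R s', ψ v * S v| ≤ ∑ v ∈ R s', |ψ v * S v| :=
          Finset.abs_sum_le_sum_abs _ _
      _ = ∑ v ∈ R s', (|m s'| * A / H) * h v := by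
          apply Finset.sum_congr rfl
          intro v hv
          have hSv : |S v| = A := by
            rcases hS v with h' | h' <;> rw [h'] <;>
              simp [abs_of_pos hA]
          rw [hψR s' h1 h2 v hv, abs_mul, abs_div, abs_mul,
            abs_of_pos (hh v), abs_of_pos hHpos, hSv]
          ring
      _ = (|m s'| * A / H) * H := by rw [← Finset.mul_sum]
      _ = |m s'| * A := by field_simp
  have habs : |∑ s' ∈ T, ∑ v ∈ R s', ψ v * S v| ≤ -(m 0) * A := by
    calc |∑ s' ∈ T, ∑ v ∈ R s', ψ v * S v|
        ≤ ∑ s' ∈ T, |∑ v ∈ R s', ψ v * S v| := Finset.abs_sum_le_sum_abs _ _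
      _ ≤ ∑ s' ∈ T, |m s'| * A := Finset.sum_le_sum hring
      _ = (∑ s' ∈ T, |m s'|) * A := by rw [Finset.sum_mul]
      _ ≤ |m 0| * A := mul_le_mul_of_nonneg_right hmabs hA.le
      _ = -(m 0) * A := by rw [abs_of_neg hm0]
  rw [hsum, hψc, hSc]
  rw [abs_le] at habs
  constructor <;> nlinarith [habs.1, habs.2]
end

section
/- Suppose Σ_{s'=1}^{s} |m_{s'}| ≤ |m_0| and m_0 > 0. If the center node v_c is healthy, i.e., S(v_c) = −A, then the DBGW wavelet coefficient W = Σ_{v ∈ V} ψ(v)·S(v) satisfies −2·A·m_0 ≤ W ≤ 0. In particular, under the hypothesis Σ_{s'=1}^{s}|m_{s'}| ≤ |m_0|, all infected nodes have DBGW coefficients of one sign and all healthy nodes have DBGW coefficients of the opposite sign. -/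
/-- **Sign/bound of DBGW coefficients at healthy nodes, `m 0 > 0` case.**
If `∑_{s'=1}^{s} |m s'| ≤ |m 0|` and `m 0 > 0`, and the center node `v_c` is healthy
(`S v_c = -A`), then the DBGW wavelet coefficient `W = ∑_{v} ψ(v) · S(v)` satisfies
`-2 · A · m 0 ≤ W ≤ 0` (so healthy nodes' coefficients have sign opposite to those of
infected nodes). -/
theorem dbgw_healthy_center_pos {V : Type*} [Fintype V] [DecidableEq V]
    (v_c : V) (s : ℕ) (hs : 1 ≤ s)
    (R : ℕ → Finset V)
    (hR_ne : ∀ s', 1 ≤ s' → s' ≤ s → (R s').Nonempty)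
    (hR_vc : ∀ s', 1 ≤ s' → s' ≤ s → v_c ∉ R s')
    (hR_disj : ∀ s' t', 1 ≤ s' → s' ≤ s → 1 ≤ t' → t' ≤ s → s' ≠ t' →
      Disjoint (R s') (R t'))
    (h : V → ℝ) (hh : ∀ v, 0 < h v)
    (m : ℕ → ℝ) (hm : ∑ s' ∈ Finset.range (s + 1), m s' = 0)
    (hmabs : ∑ s' ∈ Finset.Icc 1 s, |m s'| ≤ |m 0|)
    (hm0 : 0 < m 0)
    (ψ : V → ℝ)
    (hψc : ψ v_c = m 0)
    (hψR : ∀ s', 1 ≤ s' → s' ≤ s → ∀ v ∈ R s',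
      ψ v = m s' * h v / (∑ u ∈ R s', h u))
    (hψ0 : ∀ v, v ≠ v_c → (∀ s', 1 ≤ s' → s' ≤ s → v ∉ R s') → ψ v = 0)
    (A : ℝ) (hA : 0 < A)
    (S : V → ℝ) (hS : ∀ v, S v = A ∨ S v = -A)
    (hSc : S v_c = -A) :
    -(2 * A * m 0) ≤ ∑ v, ψ v * S v ∧ ∑ v, ψ v * S v ≤ 0 := by
  set B := Finset.Icc 1 s with hB
  have hSabs : ∀ v, |S v| = A := by
    intro v; rcases hS v with h1 | h1 <;> simp [h1, abs_of_pos hA]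
  have ring_bound : ∀ s' ∈ B, |∑ v ∈ R s', ψ v * S v| ≤ |m s'| * A := by
    intro s' hs'
    rw [hB, Finset.mem_Icc] at hs'
    have hH' : 0 < ∑ u ∈ R s', h u :=
      Finset.sum_pos (fun u _ => hh u) (hR_ne s' hs'.1 hs'.2)
    calc |∑ v ∈ R s', ψ v * S v| ≤ ∑ v ∈ R s', |ψ v * S v| :=
          Finset.abs_sum_le_sum_abs _ _
      _ = ∑ v ∈ R s', |m s'| * (h v / (∑ u ∈ R s', h u)) * A := by
          refine Finset.sum_congr rfl fun v hv => ?_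
          rw [hψR s' hs'.1 hs'.2 v hv, abs_mul, hSabs v, abs_div, abs_mul,
            abs_of_pos (hh v), abs_of_pos hH']
          ring
      _ = |m s'| * A := by
          rw [← Finset.sum_mul, ← Finset.mul_sum, ← Finset.sum_div,
            div_self hH'.ne', mul_one]
  have hvc : v_c ∉ B.biUnion R := by
    intro hmem
    rcases Finset.mem_biUnion.mp hmem with ⟨s', hs', hv⟩
    rw [hB, Finset.mem_Icc] at hs'
    exact hR_vc s' hs'.1 hs'.2 hv
  have hsum : ∑ v, ψ v * S v = ψ v_c * S v_c + ∑ s' ∈ B, ∑ v ∈ R s', ψ v * S v := by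
    rw [← Finset.sum_subset (Finset.subset_univ (insert v_c (B.biUnion R)))]
    · rw [Finset.sum_insert hvc, Finset.sum_biUnion]
      intro x hx y hy hxy
      rw [Finset.mem_coe, hB, Finset.mem_Icc] at hx hy
      exact hR_disj x y hx.1 hx.2 hy.1 hy.2 hxy
    · intro v _ hv
      simp only [Finset.mem_insert, not_or] at hv
      refine mul_eq_zero.mpr (Or.inl (hψ0 v hv.1 fun s' h1 h2 hmem => ?_))
      exact hv.2 (Finset.mem_biUnion.mpr
        ⟨s', by rw [hB, Finset.mem_Icc]; exact ⟨h1, h2⟩, hmem⟩)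
  have habs : |∑ s' ∈ B, ∑ v ∈ R s', ψ v * S v| ≤ m 0 * A := by
    calc |∑ s' ∈ B, ∑ v ∈ R s', ψ v * S v|
        ≤ ∑ s' ∈ B, |∑ v ∈ R s', ψ v * S v| := Finset.abs_sum_le_sum_abs _ _
      _ ≤ ∑ s' ∈ B, |m s'| * A := Finset.sum_le_sum ring_bound
      _ = (∑ s' ∈ B, |m s'|) * A := (Finset.sum_mul _ _ _).symm
      _ ≤ |m 0| * A := mul_le_mul_of_nonneg_right hmabs hA.le
      _ = m 0 * A := by rw [abs_of_pos hm0]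
  obtain ⟨h1, h2⟩ := abs_le.mp habs
  rw [hsum, hψc, hSc]
  constructor <;> nlinarith
end

section
/- Let the scale be s = 1, so m_0 + m_1 = 0, and suppose m_0 > 0. If the center node v_c is healthy, i.e., S(v_c) = −A, then the DBGW wavelet coefficient W = Σ_{v ∈ V} ψ(v)·S(v) satisfies W ≥ −2·A·m_0, and W = −2·A·m_0 if and only if every node b ∈ R_1 is infected, i.e., S(b) = A for all b ∈ R_1. (Hence the most susceptible healthy nodes — those completely surrounded by infected nodes — are exactly the healthy nodes with the smallest DBGW coefficient.) -/
/-- **Countermeasure design: most susceptible healthy nodes (scale 1).**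
At scale `s = 1` with `m0 + m1 = 0` and `m0 > 0`, if the center node `v_c` is healthy
(`S v_c = -A`), then the DBGW wavelet coefficient `W = ∑_{v} ψ(v) · S(v)` satisfies
`W ≥ -2 · A · m0`, and `W = -2 · A · m0` if and only if every node `b` in the ring `R1`
is infected, i.e., `S b = A` for all `b ∈ R1`. -/
theorem dbgw_scale_one_healthy_min {V : Type*} [Fintype V] [DecidableEq V]
    (v_c : V) (R1 : Finset V) (hR1 : R1.Nonempty) (hvc : v_c ∉ R1)
    (h : V → ℝ) (hh : ∀ v, 0 < h v)
    (m0 m1 : ℝ) (hm : m0 + m1 = 0) (hm0 : 0 < m0)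
    (ψ : V → ℝ)
    (hψc : ψ v_c = m0)
    (hψR : ∀ v ∈ R1, ψ v = m1 * h v / (∑ u ∈ R1, h u))
    (hψ0 : ∀ v, v ≠ v_c → v ∉ R1 → ψ v = 0)
    (A : ℝ) (hA : 0 < A)
    (S : V → ℝ) (hS : ∀ v, S v = A ∨ S v = -A)
    (hSc : S v_c = -A) :
    -(2 * A * m0) ≤ (∑ v, ψ v * S v) ∧
      ((∑ v, ψ v * S v) = -(2 * A * m0) ↔ ∀ b ∈ R1, S b = A) := by
  classical
  set T := ∑ u ∈ R1, h u with hT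
  have hTpos : 0 < T := Finset.sum_pos (fun u _ => hh u) hR1
  set X := ∑ v ∈ R1, h v * S v with hX
  set W := ∑ v, ψ v * S v with hW
  have hm1 : m1 = -m0 := by linarith
  have hsum : T * W = m0 * (-A) * T + m1 * X := by
    have : W = ∑ v ∈ insert v_c R1, ψ v * S v := by
      rw [hW]
      symm
      apply Finset.sum_subset (Finset.subset_univ _)
      intro v _ hv
      simp only [Finset.mem_insert, not_or] at hv
      rw [hψ0 v hv.1 hv.2, zero_mul]
    have h2 : ∑ v ∈ R1, ψ v * S v = (m1 / T) * X := by
      rw [hX, Finset.mul_sum]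
      exact Finset.sum_congr rfl (fun v hv => by rw [hψR v hv]; ring)
    rw [this, Finset.sum_insert hvc, hψc, hSc, h2]
    field_simp
  have hle : X ≤ T * A := by
    rw [hX, hT, Finset.sum_mul]
    apply Finset.sum_le_sum
    intro v hv
    rcases hS v with h1 | h1 <;> rw [h1]
    · nlinarith [hh v]
  rw [hm1] at hsum
  have hlow : -(2 * A * m0) ≤ W := by
    nlinarith [mul_le_mul_of_nonneg_left hle hm0.le, mul_pos hTpos hm0]
  refine ⟨hlow, ?_, ?_⟩
  · intro hWeq
    have hXeq : X = T * A := by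
      have h1 : m0 * X = m0 * (T * A) := by
        rw [hWeq] at hsum; nlinarith
      exact mul_left_cancel₀ (ne_of_gt hm0) h1
    have hall : ∀ v ∈ R1, h v * S v = h v * A := by
      rw [← Finset.sum_eq_sum_iff_of_le (fun v hv => by
        rcases hS v with h1 | h1 <;> rw [h1]
        · nlinarith [hh v])]
      rw [← hX, hXeq, hT, Finset.sum_mul]
    intro b hb
    exact mul_left_cancel₀ (ne_of_gt (hh b)) (hall b hb)
  · intro hall
    have hXeq : X = T * A := by
      rw [hX, hT, Finset.sum_mul]
      exact Finset.sum_congr rfl (fun v hv => by rw [hall v hv])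
    rw [hXeq] at hsum
    have : T * W = T * (-(2 * A * m0)) := by rw [hsum]; ring
    exact mul_left_cancel₀ (ne_of_gt hTpos) this
end

section
/- (Robustness of the HECR metric, Case 1.) Suppose Eng(Ŝ⁽ⁿ⁾) > 0 and that the number of faulty observations satisfies 2·A·n_f·(1 + ⌊N·α⌋)·M < C_s·Eng(Ŝ⁽ⁿ⁾) − Σ_{j=⌊N(1−α)⌋}^{N−1} |⟨S⁽ⁱ⁾, u_j⟩|. Then HECR_α(Ŝ⁽ⁿ⁾) < C_s; i.e., the noisy signal's high-frequency energy concentration ratio stays below the lower endpoint C_s of the random-failure prediction interval, guaranteeing correct detection of the epidemic. -/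
open Finset

/-- The GFT coefficient (inner product) of two vectors of `ℝ^N`. -/
noncomputable def gftInner (N : ℕ) (S u : ℕ → ℝ) : ℝ := ∑ k ∈ Finset.range N, S k * u k

/-- The energy of the GFT spectrum of a signal `S` with respect to the orthonormal
basis `u_0, …, u_{N-1}`. -/
noncomputable def gftEng (N : ℕ) (u : ℕ → ℕ → ℝ) (S : ℕ → ℝ) : ℝ :=
  ∑ l ∈ Finset.range N, |gftInner N S (u l)|

/-- **Robustness of the HECR metric, Case 1.**
If `Eng(Ŝⁿ) > 0` and `2·A·n_f·(1 + ⌊N·α⌋)·M < C_s·Eng(Ŝⁿ) − ∑_{j=⌊N(1−α)⌋}^{N−1} |⟨Sⁱ, u_j⟩|`,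
where `M = max_{⌊N(1−α)⌋ ≤ j ≤ N−1} ‖u_j‖_∞`, then `HECR_α(Ŝⁿ) < C_s`. -/
theorem hecr_robust_case1 (N : ℕ) (hN : 1 ≤ N)
    (u : ℕ → ℕ → ℝ)
    (hortho : ∀ i < N, ∀ j < N, gftInner N (u i) (u j) = if i = j then (1 : ℝ) else 0)
    (α : ℝ) (hα1 : 1 / (N : ℝ) ≤ α) (hα2 : α ≤ 1)
    (A : ℝ) (hA : 0 < A) (nf : ℕ)
    (Si Sn : ℕ → ℝ)
    (F : Finset ℕ) (hFsub : F ⊆ Finset.range N) (hFcard : F.card = nf)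
    (hFval : ∀ k ∈ F, Sn k - Si k = 2 * A ∨ Sn k - Si k = -(2 * A))
    (hF0 : ∀ k ∈ Finset.range N, k ∉ F → Sn k = Si k)
    (Cs : ℝ)
    (hL : Nat.floor ((N : ℝ) * (1 - α)) < N)
    (M : ℝ)
    (hM : M = (Finset.Ico (Nat.floor ((N : ℝ) * (1 - α))) N).sup'
      (Finset.nonempty_Ico.mpr hL)
      (fun j => (Finset.range N).sup'
        (Finset.nonempty_range_iff.mpr (Nat.one_le_iff_ne_zero.mp hN))
        (fun k => |u j k|)))
    (hEng : 0 < gftEng N u Sn)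
    (hbound : 2 * A * (nf : ℝ) * (1 + (Nat.floor ((N : ℝ) * α) : ℝ)) * M <
      Cs * gftEng N u Sn -
        ∑ j ∈ Finset.Ico (Nat.floor ((N : ℝ) * (1 - α))) N, |gftInner N Si (u j)|) :
    (∑ j ∈ Finset.Ico (Nat.floor ((N : ℝ) * (1 - α))) N, |gftInner N Sn (u j)|) /
        gftEng N u Sn < Cs := by
  set L := Nat.floor ((N : ℝ) * (1 - α)) with hLdef
  have hNpos : 0 < N := hN
  have hMub : ∀ j ∈ Finset.Ico L N, ∀ k ∈ Finset.range N, |u j k| ≤ M := by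
    intro j hj k hk
    rw [hM]
    exact le_trans (Finset.le_sup' (fun k => |u j k|) hk)
      (Finset.le_sup' (fun j => (Finset.range N).sup'
        (Finset.nonempty_range_iff.mpr (Nat.one_le_iff_ne_zero.mp hN))
        (fun k => |u j k|)) hj)
  have hMnn : 0 ≤ M :=
    le_trans (abs_nonneg _)
      (hMub L (Finset.mem_Ico.mpr ⟨le_refl _, hL⟩) 0 (Finset.mem_range.mpr hNpos))
  have hterm : ∀ j ∈ Finset.Ico L N,
      |gftInner N Sn (u j)| ≤ |gftInner N Si (u j)| + 2 * A * nf * M := by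
    intro j hj
    have hdiff : gftInner N Sn (u j) - gftInner N Si (u j)
        = ∑ k ∈ F, (Sn k - Si k) * u j k := by
      unfold gftInner
      rw [← Finset.sum_sub_distrib, ← Finset.sum_subset hFsub
        (fun k hk hkF => by rw [hF0 k hk hkF]; ring)]
      exact Finset.sum_congr rfl (fun k _ => by ring)
    have hbd : |∑ k ∈ F, (Sn k - Si k) * u j k| ≤ 2 * A * nf * M := by
      calc |∑ k ∈ F, (Sn k - Si k) * u j k| ≤ ∑ k ∈ F, |(Sn k - Si k) * u j k| :=
            Finset.abs_sum_le_sum_abs _ _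
        _ ≤ ∑ _k ∈ F, 2 * A * M := by
            apply Finset.sum_le_sum
            intro k hk
            rw [abs_mul]
            have h1 : |Sn k - Si k| = 2 * A := by
              rcases hFval k hk with h | h <;> rw [h] <;>
                [exact abs_of_pos (by linarith); simpa using abs_of_pos (by linarith : (0:ℝ) < 2*A)]
            rw [h1]
            exact mul_le_mul_of_nonneg_left (hMub j hj k (hFsub hk)) (by linarith)
        _ = 2 * A * nf * M := by rw [Finset.sum_const, hFcard]; push_cast; ring
    have := abs_add_le (gftInner N Si (u j)) (∑ k ∈ F, (Sn k - Si k) * u j k)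
    have heq : gftInner N Sn (u j)
        = gftInner N Si (u j) + ∑ k ∈ F, (Sn k - Si k) * u j k := by linarith [hdiff]
    rw [heq]; linarith
  have hcard : ((Finset.Ico L N).card : ℝ) ≤ 1 + (Nat.floor ((N : ℝ) * α) : ℝ) := by
    rw [Nat.card_Ico]
    have h1 : (N : ℝ) * (1 - α) < L + 1 := Nat.lt_floor_add_one _
    have h2 : (N : ℝ) * α < Nat.floor ((N : ℝ) * α) + 1 := Nat.lt_floor_add_one _
    have h5 : (N : ℝ) < ((L + Nat.floor ((N : ℝ) * α) + 2 : ℕ) : ℝ) := by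
      push_cast; nlinarith
    have h6 : N < L + Nat.floor ((N : ℝ) * α) + 2 := by exact_mod_cast h5
    have h7 : N - L ≤ 1 + Nat.floor ((N : ℝ) * α) := by omega
    exact_mod_cast Nat.cast_le.mpr h7
  have hsum : ∑ j ∈ Finset.Ico L N, |gftInner N Sn (u j)|
      ≤ (∑ j ∈ Finset.Ico L N, |gftInner N Si (u j)|)
        + ((Finset.Ico L N).card : ℝ) * (2 * A * nf * M) := by
    calc ∑ j ∈ Finset.Ico L N, |gftInner N Sn (u j)|
        ≤ ∑ j ∈ Finset.Ico L N, (|gftInner N Si (u j)| + 2 * A * nf * M) :=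
          Finset.sum_le_sum hterm
      _ = _ := by rw [Finset.sum_add_distrib, Finset.sum_const]; push_cast; ring
  have hnf : (0:ℝ) ≤ 2 * A * nf * M := by positivity
  have hlt : ∑ j ∈ Finset.Ico L N, |gftInner N Sn (u j)| < Cs * gftEng N u Sn := by
    have := mul_le_mul_of_nonneg_right hcard hnf
    nlinarith
  rw [div_lt_iff₀ hEng]
  exact hlt
end

section
/- (Robustness of the HECR metric, Case 2, nonnegative subcase.) Suppose Eng(Ŝ⁽ⁿ⁾) > 0, that Σ_{j=⌊N(1−α)⌋}^{N−1} ⟨S⁽ⁿ⁾, u_j⟩ ≥ 0, and that the number of faulty observations satisfies 2·A·n_f·(1 + ⌊N·α⌋)·M < Σ_{j=⌊N(1−α)⌋}^{N−1} ⟨S⁽ⁱ⁾, u_j⟩ − C_e·Eng(Ŝ⁽ⁿ⁾). Then HECR_α(Ŝ⁽ⁿ⁾) > C_e; i.e., the noisy signal's high-frequency energy concentration ratio stays above the upper endpoint C_e of the random-failure prediction interval, guaranteeing correct detection of the epidemic. -/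
open Finset

/-- **Robustness of the HECR metric, Case 2, nonnegative subcase.**
If `Eng(Ŝⁿ) > 0`, `∑_{j=⌊N(1−α)⌋}^{N−1} ⟨Sⁿ, u_j⟩ ≥ 0`, and
`2·A·n_f·(1 + ⌊N·α⌋)·M < ∑_{j=⌊N(1−α)⌋}^{N−1} ⟨Sⁱ, u_j⟩ − C_e·Eng(Ŝⁿ)`,
where `M = max_{⌊N(1−α)⌋ ≤ j ≤ N−1} ‖u_j‖_∞`, then `HECR_α(Ŝⁿ) > C_e`. -/
theorem hecr_robust_case2_nonneg (N : ℕ) (hN : 1 ≤ N)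
    (u : ℕ → ℕ → ℝ)
    (hortho : ∀ i < N, ∀ j < N, gftInner N (u i) (u j) = if i = j then (1 : ℝ) else 0)
    (α : ℝ) (hα1 : 1 / (N : ℝ) ≤ α) (hα2 : α ≤ 1)
    (A : ℝ) (hA : 0 < A) (nf : ℕ)
    (Si Sn : ℕ → ℝ)
    (F : Finset ℕ) (hFsub : F ⊆ Finset.range N) (hFcard : F.card = nf)
    (hFval : ∀ k ∈ F, Sn k - Si k = 2 * A ∨ Sn k - Si k = -(2 * A))
    (hF0 : ∀ k ∈ Finset.range N, k ∉ F → Sn k = Si k)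
    (Ce : ℝ)
    (hL : Nat.floor ((N : ℝ) * (1 - α)) < N)
    (M : ℝ)
    (hM : M = (Finset.Ico (Nat.floor ((N : ℝ) * (1 - α))) N).sup'
      (Finset.nonempty_Ico.mpr hL)
      (fun j => (Finset.range N).sup'
        (Finset.nonempty_range_iff.mpr (Nat.one_le_iff_ne_zero.mp hN))
        (fun k => |u j k|)))
    (hEng : 0 < gftEng N u Sn)
    (hpos : 0 ≤ ∑ j ∈ Finset.Ico (Nat.floor ((N : ℝ) * (1 - α))) N, gftInner N Sn (u j))
    (hbound : 2 * A * (nf : ℝ) * (1 + (Nat.floor ((N : ℝ) * α) : ℝ)) * M <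
      (∑ j ∈ Finset.Ico (Nat.floor ((N : ℝ) * (1 - α))) N, gftInner N Si (u j)) -
        Ce * gftEng N u Sn) :
    (∑ j ∈ Finset.Ico (Nat.floor ((N : ℝ) * (1 - α))) N, |gftInner N Sn (u j)|) /
        gftEng N u Sn > Ce := by

  set L := Nat.floor ((N : ℝ) * (1 - α)) with hLdef
  have h0N : 0 ∈ Finset.range N := Finset.mem_range.mpr hN
  -- M bounds every |u j k| for j in the window, k in range N
  have hMb : ∀ j ∈ Finset.Ico L N, ∀ k ∈ Finset.range N, |u j k| ≤ M := by
    intro j hj k hk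
    rw [hM]
    refine le_trans (Finset.le_sup' (fun k => |u j k|) hk) ?_
    exact Finset.le_sup' (fun j => (Finset.range N).sup'
      (Finset.nonempty_range_iff.mpr (Nat.one_le_iff_ne_zero.mp hN))
      (fun k => |u j k|)) hj
  have hMnn : 0 ≤ M := by
    obtain ⟨j, hj⟩ := Finset.nonempty_Ico.mpr hL
    exact le_trans (abs_nonneg _) (hMb j hj 0 h0N)
  -- pointwise noise bound
  have hnoise : ∀ j ∈ Finset.Ico L N,
      |gftInner N Sn (u j) - gftInner N Si (u j)| ≤ 2 * A * (nf : ℝ) * M := by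
    intro j hj
    have hrw : gftInner N Sn (u j) - gftInner N Si (u j)
        = ∑ k ∈ F, (Sn k - Si k) * u j k := by
      rw [gftInner, gftInner, ← Finset.sum_sub_distrib]
      have e1 : ∑ k ∈ Finset.range N, (Sn k * u j k - Si k * u j k)
          = ∑ k ∈ Finset.range N, (Sn k - Si k) * u j k :=
        Finset.sum_congr rfl (fun k _ => by ring)
      rw [e1]
      exact (Finset.sum_subset hFsub (fun k hk hkF => by rw [hF0 k hk hkF]; ring)).symm
    rw [hrw]
    calc |∑ k ∈ F, (Sn k - Si k) * u j k| ≤ ∑ k ∈ F, |(Sn k - Si k) * u j k| :=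
          Finset.abs_sum_le_sum_abs _ _
      _ ≤ ∑ k ∈ F, 2 * A * M := by
          refine Finset.sum_le_sum ?_
          intro k hk
          rw [abs_mul]
          have h1 : |Sn k - Si k| = 2 * A := by
            rcases hFval k hk with h | h <;> rw [h] <;>
              simp [abs_of_pos, abs_of_nonneg, mul_nonneg, hA.le]
          rw [h1]
          exact mul_le_mul_of_nonneg_left (hMb j hj k (hFsub hk)) (by positivity)
      _ = 2 * A * (nf : ℝ) * M := by
          rw [Finset.sum_const, hFcard]; push_cast; ring
  -- cardinality bound
  have hcard : ((Finset.Ico L N).card : ℝ) ≤ 1 + (Nat.floor ((N : ℝ) * α) : ℝ) := by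
    have hNat : N ≤ L + Nat.floor ((N : ℝ) * α) + 1 := by
      have h1 : ((N : ℝ) * (1 - α)) < (L : ℝ) + 1 := Nat.lt_floor_add_one _
      have h2 : ((N : ℝ) * α) < (Nat.floor ((N : ℝ) * α) : ℝ) + 1 :=
        Nat.lt_floor_add_one _
      have h3 : (N : ℝ) < (L : ℝ) + (Nat.floor ((N : ℝ) * α) : ℝ) + 2 := by nlinarith
      have := Nat.cast_lt (α := ℝ) |>.mp (by push_cast; linarith : (N : ℝ) < ((L + Nat.floor ((N : ℝ) * α) + 2 : ℕ) : ℝ))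
      omega
    rw [Nat.card_Ico]
    have : (N - L : ℕ) ≤ 1 + Nat.floor ((N : ℝ) * α) := by omega
    calc ((N - L : ℕ) : ℝ) ≤ ((1 + Nat.floor ((N : ℝ) * α) : ℕ) : ℝ) := Nat.cast_le.mpr this
      _ = 1 + (Nat.floor ((N : ℝ) * α) : ℝ) := by push_cast; ring
  -- sum noise bound
  have hD : |∑ j ∈ Finset.Ico L N, (gftInner N Sn (u j) - gftInner N Si (u j))|
      ≤ 2 * A * (nf : ℝ) * (1 + (Nat.floor ((N : ℝ) * α) : ℝ)) * M := by
    calc |∑ j ∈ Finset.Ico L N, (gftInner N Sn (u j) - gftInner N Si (u j))|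
        ≤ ∑ j ∈ Finset.Ico L N, |gftInner N Sn (u j) - gftInner N Si (u j)| :=
          Finset.abs_sum_le_sum_abs _ _
      _ ≤ ∑ j ∈ Finset.Ico L N, 2 * A * (nf : ℝ) * M := Finset.sum_le_sum hnoise
      _ = ((Finset.Ico L N).card : ℝ) * (2 * A * (nf : ℝ) * M) := by
          rw [Finset.sum_const]; ring
      _ ≤ (1 + (Nat.floor ((N : ℝ) * α) : ℝ)) * (2 * A * (nf : ℝ) * M) := by
          refine mul_le_mul_of_nonneg_right hcard (by positivity)
      _ = 2 * A * (nf : ℝ) * (1 + (Nat.floor ((N : ℝ) * α) : ℝ)) * M := by ring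
  have hsplit : ∑ j ∈ Finset.Ico L N, gftInner N Sn (u j)
      = (∑ j ∈ Finset.Ico L N, gftInner N Si (u j))
        + ∑ j ∈ Finset.Ico L N, (gftInner N Sn (u j) - gftInner N Si (u j)) := by
    rw [← Finset.sum_add_distrib]
    exact Finset.sum_congr rfl (fun j _ => by ring)
  have habs : (∑ j ∈ Finset.Ico L N, gftInner N Sn (u j))
      ≤ ∑ j ∈ Finset.Ico L N, |gftInner N Sn (u j)| :=
    Finset.sum_le_sum (fun j _ => le_abs_self _)
  rw [gt_iff_lt, lt_div_iff₀ hEng]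
  have hDlow := neg_abs_le (∑ j ∈ Finset.Ico L N, (gftInner N Sn (u j) - gftInner N Si (u j)))
  linarith
end

section
/- (Robustness of the HECR metric, Case 2, negative subcase.) Suppose Eng(Ŝ⁽ⁿ⁾) > 0, that Σ_{j=⌊N(1−α)⌋}^{N−1} ⟨S⁽ⁿ⁾, u_j⟩ < 0, and that the number of faulty observations satisfies 2·A·n_f·(1 + ⌊N·α⌋)·M < −Σ_{j=⌊N(1−α)⌋}^{N−1} ⟨S⁽ⁱ⁾, u_j⟩ − C_e·Eng(Ŝ⁽ⁿ⁾). Then HECR_α(Ŝ⁽ⁿ⁾) > C_e; i.e., the noisy signal's high-frequency energy concentration ratio stays above the upper endpoint C_e of the random-failure prediction interval, guaranteeing correct detection of the epidemic. -/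
open Finset

/-- **Robustness of the HECR metric, Case 2, negative subcase.**
If `Eng(Ŝⁿ) > 0`, `∑_{j=⌊N(1−α)⌋}^{N−1} ⟨Sⁿ, u_j⟩ < 0`, and
`2·A·n_f·(1 + ⌊N·α⌋)·M < −∑_{j=⌊N(1−α)⌋}^{N−1} ⟨Sⁱ, u_j⟩ − C_e·Eng(Ŝⁿ)`,
where `M = max_{⌊N(1−α)⌋ ≤ j ≤ N−1} ‖u_j‖_∞`, then `HECR_α(Ŝⁿ) > C_e`. -/
theorem hecr_robust_case2_neg (N : ℕ) (hN : 1 ≤ N)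
    (u : ℕ → ℕ → ℝ)
    (hortho : ∀ i < N, ∀ j < N, gftInner N (u i) (u j) = if i = j then (1 : ℝ) else 0)
    (α : ℝ) (hα1 : 1 / (N : ℝ) ≤ α) (hα2 : α ≤ 1)
    (A : ℝ) (hA : 0 < A) (nf : ℕ)
    (Si Sn : ℕ → ℝ)
    (F : Finset ℕ) (hFsub : F ⊆ Finset.range N) (hFcard : F.card = nf)
    (hFval : ∀ k ∈ F, Sn k - Si k = 2 * A ∨ Sn k - Si k = -(2 * A))
    (hF0 : ∀ k ∈ Finset.range N, k ∉ F → Sn k = Si k)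
    (Ce : ℝ)
    (hL : Nat.floor ((N : ℝ) * (1 - α)) < N)
    (M : ℝ)
    (hM : M = (Finset.Ico (Nat.floor ((N : ℝ) * (1 - α))) N).sup'
      (Finset.nonempty_Ico.mpr hL)
      (fun j => (Finset.range N).sup'
        (Finset.nonempty_range_iff.mpr (Nat.one_le_iff_ne_zero.mp hN))
        (fun k => |u j k|)))
    (hEng : 0 < gftEng N u Sn)
    (hneg : (∑ j ∈ Finset.Ico (Nat.floor ((N : ℝ) * (1 - α))) N, gftInner N Sn (u j)) < 0)
    (hbound : 2 * A * (nf : ℝ) * (1 + (Nat.floor ((N : ℝ) * α) : ℝ)) * M <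
      -(∑ j ∈ Finset.Ico (Nat.floor ((N : ℝ) * (1 - α))) N, gftInner N Si (u j)) -
        Ce * gftEng N u Sn) :
    (∑ j ∈ Finset.Ico (Nat.floor ((N : ℝ) * (1 - α))) N, |gftInner N Sn (u j)|) /
        gftEng N u Sn > Ce := by
  set L := Nat.floor ((N : ℝ) * (1 - α)) with hLdef
  set f := Nat.floor ((N : ℝ) * α) with hfdef
  set I := Finset.Ico L N with hIdef
  have hInonempty : I.Nonempty := Finset.nonempty_Ico.mpr hL
  have hMge : ∀ j ∈ I, ∀ k ∈ Finset.range N, |u j k| ≤ M := by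
    intro j hj k hk
    rw [hM]
    refine le_trans (Finset.le_sup' (fun k => |u j k|) hk) ?_
    exact Finset.le_sup' (fun j => (Finset.range N).sup'
      (Finset.nonempty_range_iff.mpr (Nat.one_le_iff_ne_zero.mp hN)) (fun k => |u j k|)) hj
  have hM0 : 0 ≤ M := by
    have hLI : L ∈ I := Finset.mem_Ico.mpr ⟨le_refl _, hL⟩
    have h0 : (0 : ℕ) ∈ Finset.range N := Finset.mem_range.mpr (by omega)
    exact le_trans (abs_nonneg _) (hMge L hLI 0 h0)
  have hdecomp : ∀ j, gftInner N Sn (u j) - gftInner N Si (u j)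
      = ∑ k ∈ F, (Sn k - Si k) * u j k := by
    intro j
    have h1 : ∑ k ∈ Finset.range N, (Sn k - Si k) * u j k
        = ∑ k ∈ F, (Sn k - Si k) * u j k :=
      (Finset.sum_subset hFsub (by intro k hk hkF; rw [hF0 k hk hkF]; ring)).symm
    rw [← h1]
    unfold gftInner
    rw [← Finset.sum_sub_distrib]
    exact Finset.sum_congr rfl (fun k _ => by ring)
  have hterm : ∀ j ∈ I, |gftInner N Sn (u j) - gftInner N Si (u j)| ≤ 2 * A * nf * M := by
    intro j hj
    rw [hdecomp j]
    calc |∑ k ∈ F, (Sn k - Si k) * u j k| ≤ ∑ k ∈ F, |(Sn k - Si k) * u j k| :=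
        Finset.abs_sum_le_sum_abs _ _
      _ ≤ ∑ _k ∈ F, 2 * A * M := by
        apply Finset.sum_le_sum
        intro k hk
        rw [abs_mul]
        have h1 : |Sn k - Si k| = 2 * A := by
          rcases hFval k hk with h | h
          · rw [h, abs_of_pos]; linarith
          · rw [h, abs_neg, abs_of_pos]; linarith
        rw [h1]
        have h2 := hMge j hj k (hFsub hk)
        nlinarith [abs_nonneg (u j k)]
      _ = 2 * A * nf * M := by rw [Finset.sum_const, hFcard]; push_cast; ring
  have hE : |∑ j ∈ I, gftInner N Sn (u j) - ∑ j ∈ I, gftInner N Si (u j)|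
      ≤ (I.card : ℝ) * (2 * A * nf * M) := by
    rw [← Finset.sum_sub_distrib]
    calc |∑ j ∈ I, (gftInner N Sn (u j) - gftInner N Si (u j))|
        ≤ ∑ j ∈ I, |gftInner N Sn (u j) - gftInner N Si (u j)| :=
          Finset.abs_sum_le_sum_abs _ _
      _ ≤ ∑ _j ∈ I, 2 * A * nf * M := Finset.sum_le_sum hterm
      _ = (I.card : ℝ) * (2 * A * nf * M) := by rw [Finset.sum_const]; push_cast; ring
  have hcardN : N < L + f + 2 := by
    have h1 : (N : ℝ) * (1 - α) < (L : ℝ) + 1 := Nat.lt_floor_add_one _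
    have h2 : (N : ℝ) * α < (f : ℝ) + 1 := Nat.lt_floor_add_one _
    have h3 : (N : ℝ) < (L : ℝ) + (f : ℝ) + 2 := by nlinarith
    exact_mod_cast (by push_cast; linarith : (N : ℝ) < ((L + f + 2 : ℕ) : ℝ))
  have hcard : (I.card : ℝ) ≤ 1 + (f : ℝ) := by
    have : I.card = N - L := Nat.card_Ico L N
    have : I.card ≤ 1 + f := by omega
    exact_mod_cast this
  have hnn : 0 ≤ 2 * A * (nf : ℝ) * M := by positivity
  have hcardmul : (I.card : ℝ) * (2 * A * nf * M) ≤ (1 + (f : ℝ)) * (2 * A * nf * M) :=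
    mul_le_mul_of_nonneg_right hcard hnn
  have h3 := le_of_abs_le hE
  have h1 : -(∑ j ∈ I, gftInner N Sn (u j)) ≤ ∑ j ∈ I, |gftInner N Sn (u j)| :=
    le_trans (neg_le_abs _) (Finset.abs_sum_le_sum_abs _ _)
  have hring : 2 * A * (nf : ℝ) * (1 + (f : ℝ)) * M = (1 + (f : ℝ)) * (2 * A * nf * M) := by
    ring
  rw [gt_iff_lt, lt_div_iff₀ hEng]
  linarith
end

section
/- (Robustness of the LECR metric, analogue of Case 1.) Suppose Eng(Ŝ⁽ⁿ⁾) > 0 and that the number of faulty observations satisfies 2·A·n_f·⌈γ·N⌉·M' < C_s·Eng(Ŝ⁽ⁿ⁾) − Σ_{i=0}^{⌈γN⌉−1} |⟨S⁽ⁱ⁾, u_i⟩|, where M' = max over 0 ≤ i ≤ ⌈γN⌉−1 of ‖u_i‖_∞. Then LECR_γ(Ŝ⁽ⁿ⁾) < C_s. -/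
open Finset

/-- **Robustness of the LECR metric (analogue of Case 1).**
If `Eng(Ŝⁿ) > 0` and `2·A·n_f·⌈γ·N⌉·M' < C_s·Eng(Ŝⁿ) − ∑_{i=0}^{⌈γN⌉−1} |⟨Sⁱ, u_i⟩|`,
where `M' = max_{0 ≤ i ≤ ⌈γN⌉−1} ‖u_i‖_∞`, then `LECR_γ(Ŝⁿ) < C_s`. -/
theorem lecr_robust_case1 (N : ℕ) (hN : 1 ≤ N)
    (u : ℕ → ℕ → ℝ)
    (hortho : ∀ i < N, ∀ j < N, gftInner N (u i) (u j) = if i = j then (1 : ℝ) else 0)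
    (γ : ℝ) (hγ1 : 1 / (N : ℝ) ≤ γ) (hγ2 : γ ≤ 1)
    (A : ℝ) (hA : 0 < A) (nf : ℕ)
    (Si Sn : ℕ → ℝ)
    (F : Finset ℕ) (hFsub : F ⊆ Finset.range N) (hFcard : F.card = nf)
    (hFval : ∀ k ∈ F, Sn k - Si k = 2 * A ∨ Sn k - Si k = -(2 * A))
    (hF0 : ∀ k ∈ Finset.range N, k ∉ F → Sn k = Si k)
    (Cs : ℝ)
    (hC : 1 ≤ Nat.ceil (γ * (N : ℝ)))
    (M' : ℝ)
    (hM' : M' = (Finset.range (Nat.ceil (γ * (N : ℝ)))).sup'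
      (Finset.nonempty_range_iff.mpr (Nat.one_le_iff_ne_zero.mp hC))
      (fun i => (Finset.range N).sup'
        (Finset.nonempty_range_iff.mpr (Nat.one_le_iff_ne_zero.mp hN))
        (fun k => |u i k|)))
    (hEng : 0 < gftEng N u Sn)
    (hbound : 2 * A * (nf : ℝ) * ((Nat.ceil (γ * (N : ℝ)) : ℝ)) * M' <
      Cs * gftEng N u Sn -
        ∑ i ∈ Finset.range (Nat.ceil (γ * (N : ℝ))), |gftInner N Si (u i)|) :
    (∑ i ∈ Finset.range (Nat.ceil (γ * (N : ℝ))), |gftInner N Sn (u i)|) /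
        gftEng N u Sn < Cs := by
  set m := Nat.ceil (γ * (N : ℝ)) with hm
  rw [div_lt_iff₀ hEng]
  have key : ∀ i ∈ Finset.range m,
      |gftInner N Sn (u i)| ≤ |gftInner N Si (u i)| + 2 * A * (nf : ℝ) * M' := by
    intro i hi
    have hdiff : gftInner N Sn (u i) - gftInner N Si (u i)
        = ∑ k ∈ F, (Sn k - Si k) * u i k := by
      rw [gftInner, gftInner, ← Finset.sum_sub_distrib]
      rw [← Finset.sum_subset hFsub]
      · exact Finset.sum_congr rfl (fun k _ => by ring)
      · intro k hk hk'
        rw [hF0 k hk hk']; ring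
    have hMb : ∀ k ∈ F, |u i k| ≤ M' := by
      intro k hk
      rw [hM']
      calc |u i k| ≤ (Finset.range N).sup'
            (Finset.nonempty_range_iff.mpr (Nat.one_le_iff_ne_zero.mp hN))
            (fun k => |u i k|) :=
            Finset.le_sup' (fun k => |u i k|) (hFsub hk)
        _ ≤ _ := Finset.le_sup' (fun i => (Finset.range N).sup'
            (Finset.nonempty_range_iff.mpr (Nat.one_le_iff_ne_zero.mp hN))
            (fun k => |u i k|)) hi
    have hbd : |gftInner N Sn (u i) - gftInner N Si (u i)| ≤ 2 * A * (nf : ℝ) * M' := by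
      rw [hdiff]
      calc |∑ k ∈ F, (Sn k - Si k) * u i k| ≤ ∑ k ∈ F, |(Sn k - Si k) * u i k| :=
            Finset.abs_sum_le_sum_abs _ _
        _ ≤ ∑ k ∈ F, 2 * A * M' := by
            apply Finset.sum_le_sum
            intro k hk
            rw [abs_mul]
            have h1 : |Sn k - Si k| = 2 * A := by
              rcases hFval k hk with h | h <;> rw [h]
              · exact abs_of_pos (by linarith)
              · rw [abs_neg]; exact abs_of_pos (by linarith)
            rw [h1]
            have := hMb k hk
            have := abs_nonneg (u i k)
            nlinarith
        _ = 2 * A * (nf : ℝ) * M' := by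
            rw [Finset.sum_const, hFcard, nsmul_eq_mul]; ring
    calc |gftInner N Sn (u i)|
        ≤ |gftInner N Si (u i)| + |gftInner N Sn (u i) - gftInner N Si (u i)| := by
          have := abs_add_le (gftInner N Si (u i)) (gftInner N Sn (u i) - gftInner N Si (u i))
          simpa using this
      _ ≤ _ := by linarith
  calc ∑ i ∈ Finset.range m, |gftInner N Sn (u i)|
      ≤ ∑ i ∈ Finset.range m, (|gftInner N Si (u i)| + 2 * A * (nf : ℝ) * M') :=
        Finset.sum_le_sum key
    _ = (∑ i ∈ Finset.range m, |gftInner N Si (u i)|) + 2 * A * (nf : ℝ) * (m : ℝ) * M' := by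
        rw [Finset.sum_add_distrib, Finset.sum_const, Finset.card_range, nsmul_eq_mul]; ring
    _ < Cs * gftEng N u Sn := by linarith
end

section
/- (Smoothness perturbation upper bound.) Let S⁽ⁱ⁾, S⁽ⁿ⁾ ∈ ℝ^N be such that the noise vector n = S⁽ⁿ⁾ − S⁽ⁱ⁾ has exactly n_f nonzero entries, each equal to 2A or −2A, where A > 0. Then SM(S⁽ⁿ⁾) ≤ SM(S⁽ⁱ⁾) + 2·n_f·A·D^{3/2}·√Δ + 2·n_f·A·√(Δ·D). -/
open scoped Classical

/-- The smoothness of a graph signal `S ∈ ℝ^N` with respect to the weighted adjacency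
matrix `a`: `SM(S) = ∑_{i} (∑_{j} a(i,j)·(S(j) − S(i))²)^{1/2}`. -/
noncomputable def smoothness (N : ℕ) (a : ℕ → ℕ → ℝ) (S : ℕ → ℝ) : ℝ :=
  ∑ i ∈ Finset.range N, Real.sqrt (∑ j ∈ Finset.range N, a i j * (S j - S i) ^ 2)

/-!
Writing `Sⁿ = Sⁱ + n`, Minkowski's inequality splits the local variation at node `i` into that
of `Sⁱ`, the weighted `ℓ²` norm of the neighbours' noise, bounded by `∑ⱼ √a(i,j)·|n(j)|`, and
`√(∑ⱼ a(i,j))·|n(i)|`. Summing over `i`, symmetry turns the middle term into column sums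
`∑ᵢ √a(i,j) ≤ D·√Δ`, while the row sums satisfy `∑ⱼ a(i,j) ≤ D·Δ`. Hence
`SM(Sⁱ + n) ≤ SM(Sⁱ) + (D·√Δ + √(Δ·D))·‖n‖₁` for any noise `n`, and here `‖n‖₁ = 2·n_f·A`
and `D ≤ D^{3/2}`.
-/

open Finset

section WeightedSums

variable {ι : Type*} (s : Finset ι)

theorem Real.sqrt_sum_add_sq_le (f g : ι → ℝ) :
    √(∑ j ∈ s, (f j + g j) ^ 2) ≤ √(∑ j ∈ s, f j ^ 2) + √(∑ j ∈ s, g j ^ 2) := by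
  have hf : 0 ≤ ∑ j ∈ s, f j ^ 2 := sum_nonneg fun _ _ => sq_nonneg _
  have hg : 0 ≤ ∑ j ∈ s, g j ^ 2 := sum_nonneg fun _ _ => sq_nonneg _
  have hcs := Real.sum_mul_le_sqrt_mul_sqrt s f g
  have hexp : ∑ j ∈ s, (f j + g j) ^ 2
      = ∑ j ∈ s, f j ^ 2 + 2 * ∑ j ∈ s, f j * g j + ∑ j ∈ s, g j ^ 2 := by
    simp only [add_sq, sum_add_distrib, mul_sum, mul_assoc]
  rw [Real.sqrt_le_left (by positivity), hexp, add_sq, Real.sq_sqrt hf, Real.sq_sqrt hg]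
  linarith

theorem Real.sqrt_sum_sq_le_sum_abs (f : ι → ℝ) : √(∑ j ∈ s, f j ^ 2) ≤ ∑ j ∈ s, |f j| := by
  rw [Real.sqrt_le_left (sum_nonneg fun _ _ => abs_nonneg _)]
  simpa only [sq_abs] using sum_sq_le_sq_sum_of_nonneg (s := s) fun j _ => abs_nonneg (f j)

variable {s} {w : ι → ℝ}

theorem sum_mul_sq_eq_sum_sqrt_mul_sq (hw : ∀ j ∈ s, 0 ≤ w j) (f : ι → ℝ) :
    ∑ j ∈ s, w j * f j ^ 2 = ∑ j ∈ s, (√(w j) * f j) ^ 2 :=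
  sum_congr rfl fun j hj => by rw [mul_pow, Real.sq_sqrt (hw j hj)]

theorem Real.sqrt_sum_mul_add_sq_le (hw : ∀ j ∈ s, 0 ≤ w j) (f g : ι → ℝ) :
    √(∑ j ∈ s, w j * (f j + g j) ^ 2)
      ≤ √(∑ j ∈ s, w j * f j ^ 2) + √(∑ j ∈ s, w j * g j ^ 2) := by
  simpa only [sum_mul_sq_eq_sum_sqrt_mul_sq hw, mul_add]
    using Real.sqrt_sum_add_sq_le s (fun j => √(w j) * f j) (fun j => √(w j) * g j)

theorem Real.sqrt_sum_mul_sq_le_sum (hw : ∀ j ∈ s, 0 ≤ w j) (f : ι → ℝ) :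
    √(∑ j ∈ s, w j * f j ^ 2) ≤ ∑ j ∈ s, √(w j) * |f j| := by
  simpa only [sum_mul_sq_eq_sum_sqrt_mul_sq hw, abs_mul, Real.sqrt_nonneg, abs_of_nonneg]
    using Real.sqrt_sum_sq_le_sum_abs s (fun j => √(w j) * f j)

theorem Real.sqrt_sum_mul_const_sq (hw : ∀ j ∈ s, 0 ≤ w j) (c : ℝ) :
    √(∑ j ∈ s, w j * c ^ 2) = √(∑ j ∈ s, w j) * |c| := by
  rw [← sum_mul, Real.sqrt_mul (sum_nonneg hw), Real.sqrt_sq_eq_abs]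

theorem sqrt_sum_mul_sq_sub_add_le (hw : ∀ j ∈ s, 0 ≤ w j) (S n : ι → ℝ) (i : ι) :
    √(∑ j ∈ s, w j * ((S + n) j - (S + n) i) ^ 2)
      ≤ √(∑ j ∈ s, w j * (S j - S i) ^ 2) + ∑ j ∈ s, √(w j) * |n j|
        + √(∑ j ∈ s, w j) * |n i| := by
  have hsplit : ∀ j, (S + n) j - (S + n) i = (S j - S i) + (n j + -n i) := fun j => by
    simp only [Pi.add_apply]; ring
  simp only [hsplit]
  calc _ ≤ √(∑ j ∈ s, w j * (S j - S i) ^ 2) + √(∑ j ∈ s, w j * (n j + -n i) ^ 2) :=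
        Real.sqrt_sum_mul_add_sq_le hw _ _
    _ ≤ √(∑ j ∈ s, w j * (S j - S i) ^ 2)
          + (√(∑ j ∈ s, w j * n j ^ 2) + √(∑ j ∈ s, w j * (-n i) ^ 2)) := by
        gcongr; exact Real.sqrt_sum_mul_add_sq_le hw _ _
    _ ≤ _ := by
        rw [Real.sqrt_sum_mul_const_sq hw, abs_neg, ← add_assoc]
        gcongr
        exact Real.sqrt_sum_mul_sq_le_sum hw n

end WeightedSums

theorem Finset.sum_le_mul_of_card_filter_ne_zero_le {ι : Type*} {s : Finset ι} {f : ι → ℝ}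
    {c D : ℝ} (hc : 0 ≤ c) (hf : ∀ j ∈ s, f j ≤ c) (hcard : (#(s.filter (f · ≠ 0)) : ℝ) ≤ D) :
    ∑ j ∈ s, f j ≤ D * c := by
  rw [← sum_filter_ne_zero]
  calc ∑ j ∈ s.filter (f · ≠ 0), f j ≤ #(s.filter (f · ≠ 0)) • c :=
        sum_le_card_nsmul _ _ _ fun j hj => hf j (mem_filter.mp hj).1
    _ ≤ D * c := by rw [nsmul_eq_mul]; gcongr

theorem smoothness_add_le_add_sum_add_sum (N : ℕ) (a : ℕ → ℕ → ℝ) (hnn : ∀ i j, 0 ≤ a i j)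
    (S n : ℕ → ℝ) :
    smoothness N a (S + n) ≤ smoothness N a S
      + ∑ i ∈ range N, ∑ j ∈ range N, √(a i j) * |n j|
      + ∑ i ∈ range N, √(∑ j ∈ range N, a i j) * |n i| := by
  simp only [smoothness, ← sum_add_distrib]
  exact sum_le_sum fun i _ => sqrt_sum_mul_sq_sub_add_le (fun j _ => hnn i j) S n i

section BoundedDegree

variable {N : ℕ} {a : ℕ → ℕ → ℝ} {Δ D : ℝ}

theorem sum_row_le (hΔ : 0 ≤ Δ) (haΔ : ∀ i j, a i j ≤ Δ)
    (hdeg : ∀ i ∈ range N, (#((range N).filter (fun j => a i j ≠ 0)) : ℝ) ≤ D)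
    {i : ℕ} (hi : i ∈ range N) : ∑ j ∈ range N, a i j ≤ D * Δ :=
  sum_le_mul_of_card_filter_ne_zero_le hΔ (fun j _ => haΔ i j) (hdeg i hi)

theorem sum_sqrt_col_le (hsymm : ∀ i j, a i j = a j i) (hnn : ∀ i j, 0 ≤ a i j)
    (haΔ : ∀ i j, a i j ≤ Δ)
    (hdeg : ∀ i ∈ range N, (#((range N).filter (fun j => a i j ≠ 0)) : ℝ) ≤ D)
    {j : ℕ} (hj : j ∈ range N) : ∑ i ∈ range N, √(a i j) ≤ D * √Δ := by
  refine sum_le_mul_of_card_filter_ne_zero_le (Real.sqrt_nonneg Δ)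
    (fun i _ => Real.sqrt_le_sqrt (haΔ i j)) ?_
  simpa only [Real.sqrt_ne_zero (hnn _ _), hsymm _ j] using hdeg j hj

theorem smoothness_add_le (hsymm : ∀ i j, a i j = a j i) (hnn : ∀ i j, 0 ≤ a i j)
    (hΔ : 0 ≤ Δ) (haΔ : ∀ i j, a i j ≤ Δ)
    (hdeg : ∀ i ∈ range N, (#((range N).filter (fun j => a i j ≠ 0)) : ℝ) ≤ D)
    (S n : ℕ → ℝ) :
    smoothness N a (S + n)
      ≤ smoothness N a S + (D * √Δ + √(Δ * D)) * ∑ i ∈ range N, |n i| := by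
  have hneighbours : ∑ i ∈ range N, ∑ j ∈ range N, √(a i j) * |n j|
      ≤ D * √Δ * ∑ j ∈ range N, |n j| := by
    rw [sum_comm, mul_sum]
    exact sum_le_sum fun j hj => by
      rw [← sum_mul]; gcongr; exact sum_sqrt_col_le hsymm hnn haΔ hdeg hj
  have hself : ∑ i ∈ range N, √(∑ j ∈ range N, a i j) * |n i|
      ≤ √(Δ * D) * ∑ i ∈ range N, |n i| := by
    rw [mul_sum]
    exact sum_le_sum fun i hi => by
      gcongr; rw [mul_comm Δ]; exact sum_row_le hΔ haΔ hdeg hi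
  linarith [smoothness_add_le_add_sum_add_sum N a hnn S n]

end BoundedDegree

theorem smoothness_perturb_upper_general (N : ℕ) (a : ℕ → ℕ → ℝ)
    (hsymm : ∀ i j, a i j = a j i) (hnn : ∀ i j, 0 ≤ a i j)
    (Δ : ℝ) (hΔ : 0 < Δ) (haΔ : ∀ i j, a i j ≤ Δ)
    (D : ℝ) (hD : 1 ≤ D)
    (hdeg : ∀ i ∈ Finset.range N,
      ((((Finset.range N).filter (fun j => a i j ≠ 0)).card : ℝ)) ≤ D)
    (A : ℝ) (hA : 0 < A) (nf : ℕ)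
    (Si Sn : ℕ → ℝ)
    (F : Finset ℕ) (hFsub : F ⊆ Finset.range N) (hFcard : F.card = nf)
    (hFval : ∀ k ∈ F, Sn k - Si k = 2 * A ∨ Sn k - Si k = -(2 * A))
    (hF0 : ∀ k ∈ Finset.range N, k ∉ F → Sn k = Si k) :
    smoothness N a Sn ≤ smoothness N a Si +
      2 * (nf : ℝ) * A * D ^ ((3 : ℝ) / 2) * Real.sqrt Δ +
      2 * (nf : ℝ) * A * Real.sqrt (Δ * D) := by
  have hnoise : ∑ k ∈ range N, |(Sn - Si) k| = nf * (2 * A) := by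
    rw [← sum_subset hFsub fun k hk hkF => by simp [hF0 k hk hkF], ← hFcard, ← nsmul_eq_mul,
      ← sum_const]
    refine sum_congr rfl fun k hk => ?_
    rcases hFval k hk with h | h <;>
      simp only [Pi.sub_apply, h, abs_neg, abs_of_pos (by positivity : 0 < 2 * A)]
  have hD_le : D ≤ D ^ ((3 : ℝ) / 2) := by
    simpa only [Real.rpow_one] using
      Real.rpow_le_rpow_of_exponent_le hD (by norm_num : (1 : ℝ) ≤ 3 / 2)
  have hbound := smoothness_add_le hsymm hnn hΔ.le haΔ hdeg Si (Sn - Si)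
  rw [add_sub_cancel, hnoise] at hbound
  calc smoothness N a Sn
      ≤ smoothness N a Si + (D * √Δ + √(Δ * D)) * (nf * (2 * A)) := hbound
    _ ≤ smoothness N a Si + (D ^ ((3 : ℝ) / 2) * √Δ + √(Δ * D)) * (nf * (2 * A)) := by gcongr
    _ = _ := by ring

/-- **Smoothness perturbation upper bound.**
If the noise vector `n = Sⁿ − Sⁱ` has exactly `n_f` nonzero entries, each equal to
`2A` or `−2A` with `A > 0`, then
`SM(Sⁿ) ≤ SM(Sⁱ) + 2·n_f·A·D^{3/2}·√Δ + 2·n_f·A·√(Δ·D)`, where `Δ` bounds the edge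
weights and `D ≥ 1` bounds the node degrees. -/
theorem smoothness_perturb_upper (N : ℕ) (hN : 1 ≤ N) (a : ℕ → ℕ → ℝ)
    (hsymm : ∀ i j, a i j = a j i) (hnn : ∀ i j, 0 ≤ a i j)
    (hdiag : ∀ i, a i i = 0)
    (Δ : ℝ) (hΔ : 0 < Δ) (haΔ : ∀ i j, a i j ≤ Δ)
    (D : ℝ) (hD : 1 ≤ D)
    (hdeg : ∀ i ∈ Finset.range N,
      ((((Finset.range N).filter (fun j => a i j ≠ 0)).card : ℝ)) ≤ D)
    (A : ℝ) (hA : 0 < A) (nf : ℕ)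
    (Si Sn : ℕ → ℝ)
    (F : Finset ℕ) (hFsub : F ⊆ Finset.range N) (hFcard : F.card = nf)
    (hFval : ∀ k ∈ F, Sn k - Si k = 2 * A ∨ Sn k - Si k = -(2 * A))
    (hF0 : ∀ k ∈ Finset.range N, k ∉ F → Sn k = Si k) :
    smoothness N a Sn ≤ smoothness N a Si +
      2 * (nf : ℝ) * A * D ^ ((3 : ℝ) / 2) * Real.sqrt Δ +
      2 * (nf : ℝ) * A * Real.sqrt (Δ * D) :=
  smoothness_perturb_upper_general N a hsymm hnn Δ hΔ haΔ D hD hdeg A hA nf Si Sn F hFsub hFcard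
    hFval hF0
end

section
/- (Smoothness perturbation lower bound.) Let S⁽ⁱ⁾, S⁽ⁿ⁾ ∈ ℝ^N be such that the noise vector n = S⁽ⁿ⁾ − S⁽ⁱ⁾ has exactly n_f nonzero entries, each equal to 2A or −2A, where A > 0. Then SM(S⁽ⁿ⁾) ≥ SM(S⁽ⁱ⁾) − 2·n_f·A·D^{3/2}·√Δ − 2·n_f·A·√(Δ·D). -/
open Finset

namespace Real

variable {ι : Type*}

theorem sqrt_sum_le_sum_sqrt (s : Finset ι) {f : ι → ℝ} (hf : ∀ j ∈ s, 0 ≤ f j) :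
    √(∑ j ∈ s, f j) ≤ ∑ j ∈ s, √(f j) := by
  have h : ∑ j ∈ s, f j ≤ (∑ j ∈ s, √(f j)) ^ 2 :=
    calc ∑ j ∈ s, f j = ∑ j ∈ s, √(f j) ^ 2 := sum_congr rfl fun j hj => (sq_sqrt (hf j hj)).symm
      _ ≤ _ := sum_sq_le_sq_sum_of_nonneg fun j _ => sqrt_nonneg _
  exact (sqrt_le_left (sum_nonneg fun j _ => sqrt_nonneg _)).2 h

theorem sqrt_sum_mul_add_sq_le_s14 (s : Finset ι) {w : ι → ℝ} (hw : ∀ j ∈ s, 0 ≤ w j)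
    (x y : ι → ℝ) :
    √(∑ j ∈ s, w j * (x j + y j) ^ 2) ≤
      √(∑ j ∈ s, w j * x j ^ 2) + √(∑ j ∈ s, w j * y j ^ 2) := by
  let v (z : ι → ℝ) : EuclideanSpace ℝ s := WithLp.toLp 2 fun j => √(w j) * z j
  have hv (z : ι → ℝ) : √(∑ j ∈ s, w j * z j ^ 2) = ‖v z‖ := by
    rw [EuclideanSpace.norm_eq, ← sum_coe_sort s]
    congr 1
    refine Fintype.sum_congr _ _ fun j => ?_
    simp [v, mul_pow, sq_sqrt (hw j j.2)]
  calc √(∑ j ∈ s, w j * (x j + y j) ^ 2) = ‖v x + v y‖ := by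
        rw [hv fun j => x j + y j]
        congr 1
        ext j
        simp [v, mul_add]
    _ ≤ ‖v x‖ + ‖v y‖ := norm_add_le _ _
    _ = _ := by rw [hv, hv]

end Real

theorem sqrt_sum_mul_sub_sq_le {ι : Type*} (s : Finset ι) {w : ι → ℝ} (hw : ∀ j ∈ s, 0 ≤ w j)
    (d : ι → ℝ) (c : ℝ) :
    √(∑ j ∈ s, w j * (d j - c) ^ 2) ≤ ∑ j ∈ s, √(w j) * |d j| + |c| * √(∑ j ∈ s, w j) := by
  have hsum : ∑ j ∈ s, w j * c ^ 2 = (∑ j ∈ s, w j) * c ^ 2 := (sum_mul ..).symm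
  calc √(∑ j ∈ s, w j * (d j - c) ^ 2)
      ≤ √(∑ j ∈ s, w j * d j ^ 2) + √(∑ j ∈ s, w j * (-c) ^ 2) := by
        simpa only [sub_eq_add_neg] using Real.sqrt_sum_mul_add_sq_le_s14 s hw d fun _ => -c
    _ ≤ ∑ j ∈ s, √(w j * d j ^ 2) + √((∑ j ∈ s, w j) * c ^ 2) := by
        rw [neg_sq, hsum]
        gcongr
        exact Real.sqrt_sum_le_sum_sqrt s fun j hj => mul_nonneg (hw j hj) (sq_nonneg _)
    _ = _ := by
        rw [Real.sqrt_mul' _ (sq_nonneg c), Real.sqrt_sq_eq_abs, mul_comm]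
        refine congrArg (· + _) (sum_congr rfl fun j hj => ?_)
        rw [Real.sqrt_mul (hw j hj), Real.sqrt_sq_eq_abs]

theorem sum_le_mul_of_card_support_le {ι : Type*} {s : Finset ι} {f g : ι → ℝ} {M D : ℝ}
    (hM : 0 ≤ M) (hg : ∀ j ∈ s, g j ≤ M) (hsupp : ∀ j ∈ s, g j ≠ 0 → f j ≠ 0)
    (hcard : (#{j ∈ s | f j ≠ 0} : ℝ) ≤ D) :
    ∑ j ∈ s, g j ≤ D * M := by
  rw [← sum_filter_of_ne hsupp]
  calc ∑ j ∈ s with f j ≠ 0, g j ≤ #{j ∈ s | f j ≠ 0} * M := by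
        simpa using sum_le_card_nsmul _ _ M fun j hj => hg j (mem_filter.1 hj).1
    _ ≤ D * M := by gcongr

theorem smoothness_add_le_s14 {N : ℕ} {a : ℕ → ℕ → ℝ} (hnn : ∀ i j, 0 ≤ a i j) (S T : ℕ → ℝ) :
    smoothness N a (S + T) ≤ smoothness N a S + smoothness N a T := by
  rw [smoothness, smoothness, smoothness, ← sum_add_distrib]
  refine sum_le_sum fun i _ => ?_
  simpa only [Pi.add_apply, add_sub_add_comm] using
    Real.sqrt_sum_mul_add_sq_le_s14 _ (fun j _ => hnn i j) (fun j => S j - S i) fun j => T j - T i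

section DegreeBounds

variable {N : ℕ} {a : ℕ → ℕ → ℝ} {Δ D : ℝ}

theorem sum_le_mul_of_degree_le (haΔ : ∀ i j, a i j ≤ Δ) (hΔ : 0 ≤ Δ)
    (hdeg : ∀ i ∈ range N, (#{j ∈ range N | a i j ≠ 0} : ℝ) ≤ D) {i : ℕ} (hi : i ∈ range N) :
    ∑ j ∈ range N, a i j ≤ D * Δ :=
  sum_le_mul_of_card_support_le hΔ (fun j _ => haΔ i j) (fun _ _ => id) (hdeg i hi)

theorem sum_sqrt_le_mul_of_degree_le (hsymm : ∀ i j, a i j = a j i) (haΔ : ∀ i j, a i j ≤ Δ)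
    (hdeg : ∀ i ∈ range N, (#{j ∈ range N | a i j ≠ 0} : ℝ) ≤ D) {j : ℕ} (hj : j ∈ range N) :
    ∑ i ∈ range N, √(a i j) ≤ D * √Δ :=
  sum_le_mul_of_card_support_le (Real.sqrt_nonneg Δ) (fun i _ => Real.sqrt_le_sqrt (haΔ i j))
    (fun i _ h h0 => h (by rw [hsymm, h0, Real.sqrt_zero])) (hdeg j hj)

theorem smoothness_le_sum_abs_mul (hsymm : ∀ i j, a i j = a j i) (hnn : ∀ i j, 0 ≤ a i j)
    (haΔ : ∀ i j, a i j ≤ Δ) (hΔ : 0 ≤ Δ)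
    (hdeg : ∀ i ∈ range N, (#{j ∈ range N | a i j ≠ 0} : ℝ) ≤ D) (d : ℕ → ℝ) :
    smoothness N a d ≤ (∑ j ∈ range N, |d j|) * (D * √Δ + √(Δ * D)) := by
  calc smoothness N a d
      ≤ ∑ i ∈ range N, (∑ j ∈ range N, √(a i j) * |d j| + |d i| * √(∑ j ∈ range N, a i j)) :=
        sum_le_sum fun i _ => sqrt_sum_mul_sub_sq_le _ (fun j _ => hnn i j) d (d i)
    _ = ∑ j ∈ range N, |d j| * ∑ i ∈ range N, √(a i j) +
          ∑ i ∈ range N, |d i| * √(∑ j ∈ range N, a i j) := by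
        rw [sum_add_distrib, sum_comm]
        simp only [mul_sum, mul_comm]
    _ ≤ ∑ j ∈ range N, |d j| * (D * √Δ) + ∑ i ∈ range N, |d i| * √(Δ * D) := by
        gcongr with j hj i hi
        · exact sum_sqrt_le_mul_of_degree_le hsymm haΔ hdeg hj
        · rw [mul_comm Δ]
          exact sum_le_mul_of_degree_le haΔ hΔ hdeg hi
    _ = _ := by rw [← sum_mul, ← sum_mul, ← mul_add]

end DegreeBounds

theorem smoothness_perturb_lower_general (N : ℕ) (a : ℕ → ℕ → ℝ)
    (hsymm : ∀ i j, a i j = a j i) (hnn : ∀ i j, 0 ≤ a i j)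
    (Δ : ℝ) (hΔ : 0 < Δ) (haΔ : ∀ i j, a i j ≤ Δ)
    (D : ℝ) (hD : 1 ≤ D)
    (hdeg : ∀ i ∈ Finset.range N,
      ((((Finset.range N).filter (fun j => a i j ≠ 0)).card : ℝ)) ≤ D)
    (A : ℝ) (hA : 0 < A) (nf : ℕ)
    (Si Sn : ℕ → ℝ)
    (F : Finset ℕ) (hFsub : F ⊆ Finset.range N) (hFcard : F.card = nf)
    (hFval : ∀ k ∈ F, Sn k - Si k = 2 * A ∨ Sn k - Si k = -(2 * A))
    (hF0 : ∀ k ∈ Finset.range N, k ∉ F → Sn k = Si k) :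
    smoothness N a Sn ≥ smoothness N a Si -
      2 * (nf : ℝ) * A * D ^ ((3 : ℝ) / 2) * Real.sqrt Δ -
      2 * (nf : ℝ) * A * Real.sqrt (Δ * D) := by
  have htriangle : smoothness N a Si ≤ smoothness N a Sn + smoothness N a (Si - Sn) := by
    simpa using smoothness_add_le_s14 hnn Sn (Si - Sn)
  have hnoise : ∑ j ∈ range N, |(Si - Sn) j| = 2 * nf * A := by
    have habs : ∀ k ∈ F, |(Si - Sn) k| = 2 * A := fun k hk => by
      rw [Pi.sub_apply, abs_sub_comm]
      rcases hFval k hk with h | h <;> simp [h, abs_of_pos hA]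
    rw [← sum_subset hFsub fun k hk hkF => by simp [hF0 k hk hkF], sum_congr rfl habs,
      sum_const, hFcard, nsmul_eq_mul]
    ring
  have hD32 : D * √Δ ≤ D ^ ((3 : ℝ) / 2) * √Δ := by
    gcongr
    simpa using Real.rpow_le_rpow_of_exponent_le hD (by norm_num : (1 : ℝ) ≤ 3 / 2)
  have hnoise_smooth := smoothness_le_sum_abs_mul hsymm hnn haΔ hΔ.le hdeg (Si - Sn)
  rw [hnoise] at hnoise_smooth
  have := mul_le_mul_of_nonneg_left hD32 (by positivity : (0 : ℝ) ≤ 2 * nf * A)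
  linarith

/-- **Smoothness perturbation lower bound.**
If the noise vector `n = Sⁿ − Sⁱ` has exactly `n_f` nonzero entries, each equal to
`2A` or `−2A` with `A > 0`, then
`SM(Sⁿ) ≥ SM(Sⁱ) − 2·n_f·A·D^{3/2}·√Δ − 2·n_f·A·√(Δ·D)`, where `Δ` bounds the edge
weights and `D ≥ 1` bounds the node degrees. -/
theorem smoothness_perturb_lower (N : ℕ) (hN : 1 ≤ N) (a : ℕ → ℕ → ℝ)
    (hsymm : ∀ i j, a i j = a j i) (hnn : ∀ i j, 0 ≤ a i j)
    (hdiag : ∀ i, a i i = 0)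
    (Δ : ℝ) (hΔ : 0 < Δ) (haΔ : ∀ i j, a i j ≤ Δ)
    (D : ℝ) (hD : 1 ≤ D)
    (hdeg : ∀ i ∈ Finset.range N,
      ((((Finset.range N).filter (fun j => a i j ≠ 0)).card : ℝ)) ≤ D)
    (A : ℝ) (hA : 0 < A) (nf : ℕ)
    (Si Sn : ℕ → ℝ)
    (F : Finset ℕ) (hFsub : F ⊆ Finset.range N) (hFcard : F.card = nf)
    (hFval : ∀ k ∈ F, Sn k - Si k = 2 * A ∨ Sn k - Si k = -(2 * A))
    (hF0 : ∀ k ∈ Finset.range N, k ∉ F → Sn k = Si k) :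
    smoothness N a Sn ≥ smoothness N a Si -
      2 * (nf : ℝ) * A * D ^ ((3 : ℝ) / 2) * Real.sqrt Δ -
      2 * (nf : ℝ) * A * Real.sqrt (Δ * D) :=
  smoothness_perturb_lower_general N a hsymm hnn Δ hΔ haΔ D hD hdeg A hA nf Si Sn F hFsub hFcard
    hFval hF0
end
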